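/- arXiv:0811.4295 — 2 statements merged into one kernel-verified Lean document; each statement's English description precedes it below -/
import Mathlib

section
/- Let E be an A-module with a skew-symmetric algebroid structure: a skew-symmetric R-bilinear bracket ⟦·,·⟧_E and an A-linear anchor ρ_E : E → Der(A) satisfying ⟦f • σ, g • σ'⟧_E = (f * ρ_E(σ) g) • σ' - (g * ρ_E(σ') f) • σ + (f * g) • ⟦σ, σ'⟧_E. Let D be an A-module with A-linear maps i : D → E and P : E → D such that P ∘ i = id_D. Then the bracket ⟦σ, σ'⟧_D = P(⟦i σ, i σ'⟧_E) is skew-symmetric and, together with the anchor ρ_D = ρ_E ∘ i, defines a skew-symmetric algebroid structure on D, i.e. ⟦f • σ, g • σ'⟧_D = (f * ρ_D(σ) g) • σ' - (g * ρ_D(σ') f) • σ + (f * g) • ⟦σ, σ'⟧_D for all f, g ∈ A and σ, σ' ∈ D. -/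
/-- `B : M → N → P` is `R`-bilinear. -/
def IsRBilinear (R : Type*) {M N P : Type*} [Semiring R]
    [AddCommMonoid M] [Module R M] [AddCommMonoid N] [Module R N]
    [AddCommMonoid P] [Module R P] (B : M → N → P) : Prop :=
  (∀ x y z, B (x + y) z = B x z + B y z) ∧
  (∀ (r : R) (x : M) (z : N), B (r • x) z = r • B x z) ∧
  (∀ (x : M) (y z : N), B x (y + z) = B x y + B x z) ∧
  (∀ (r : R) (x : M) (y : N), B x (r • y) = r • B x y)

variable {R A : Type*} [CommRing R] [CommRing A] [Algebra R A]

/-- `D` is a `ρ`-connection on the `A`-module `M`. -/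
def IsConnection {M : Type*} [AddCommGroup M] [Module R M] [Module A M]
    [IsScalarTower R A M]
    (ρ : M →ₗ[A] Derivation R A A) (D : M → M → M) : Prop :=
  IsRBilinear R D ∧
  (∀ (f : A) (σ γ : M), D (f • σ) γ = f • D σ γ) ∧
  (∀ (f : A) (σ γ : M), D σ (f • γ) = (ρ σ) f • γ + f • D σ γ)

/-- `(B, ρˡ, ρʳ)` is an algebroid structure on the `A`-module `M`. -/
def IsAlgebroid {M : Type*} [AddCommGroup M] [Module R M] [Module A M]
    [IsScalarTower R A M]
    (ρl ρr : M →ₗ[A] Derivation R A A) (B : M → M → M) : Prop :=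
  IsRBilinear R B ∧
  ∀ (f g : A) (σ σ' : M),
    B (f • σ) (g • σ') =
      (f * (ρl σ) g) • σ' - (g * (ρr σ') f) • σ + (f * g) • B σ σ'

variable {E D : Type*}
  [AddCommGroup E] [Module R E] [Module A E] [IsScalarTower R A E]
  [AddCommGroup D] [Module R D] [Module A D] [IsScalarTower R A D]

/-- the projection of a skew-symmetric algebroid bracket on `E` to a
submodule `D` (via an inclusion `i` and a projector `P` with `P ∘ i = id`) is again a
skew-symmetric algebroid structure on `D`, with anchor `ρ_D = ρ_E ∘ i`. -/
theorem projected_skew_algebroid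
    (ρE : E →ₗ[A] Derivation R A A) (Br : E → E → E)
    (hE : IsAlgebroid ρE ρE Br)
    (hskew : ∀ σ σ' : E, Br σ σ' = -Br σ' σ)
    (i : D →ₗ[A] E) (P : E →ₗ[A] D) (hPi : ∀ d : D, P (i d) = d) :
    (∀ σ σ' : D, P (Br (i σ) (i σ')) = -P (Br (i σ') (i σ))) ∧
    IsAlgebroid (ρE ∘ₗ i) (ρE ∘ₗ i) (fun σ σ' => P (Br (i σ) (i σ'))) := by
  obtain ⟨⟨hb1, hb2, hb3, hb4⟩, hleib⟩ := hE
  refine ⟨fun σ σ' => by rw [hskew (i σ) (i σ'), map_neg], ⟨⟨?_, ?_, ?_, ?_⟩, ?_⟩⟩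
  · intro x y z; simp [map_add, hb1]
  · intro r x z; simp [LinearMap.map_smul_of_tower, hb2]
  · intro x y z; simp [map_add, hb3]
  · intro r x y; simp [LinearMap.map_smul_of_tower, hb4]
  · intro f g σ σ'
    simp only [map_smul, hleib, LinearMap.coe_comp, Function.comp_apply]
    rw [map_add, map_sub, map_smul, map_smul, map_smul, hPi, hPi]
end

section
/- Let E be an A-module with an A-linear anchor ρ_E : E → Der(A), and let ∇ be a ρ_E-connection on E. Let D be an A-module with A-linear maps i : D → E, Π̃ : D → E and P : E → D such that P ∘ i = id_D and P ∘ Π̃ = id_D. Then the map Dˡ(σ, γ) = P(∇(i σ, Π̃ γ)) is a (ρ_E ∘ i)-connection on D, and the map Dʳ(σ, γ) = P(∇(Π̃ σ, i γ)) is a (ρ_E ∘ Π̃)-connection on D. -/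
variable {R A : Type*} [CommRing R] [CommRing A] [Algebra R A]

variable {E D : Type*}
  [AddCommGroup E] [Module R E] [Module A E] [IsScalarTower R A E]
  [AddCommGroup D] [Module R D] [Module A D] [IsScalarTower R A D]

/-- given a `ρ_E`-connection `∇` on `E` and `A`-linear maps `i, Π̃ : D → E`,
`P : E → D` with `P ∘ i = id` and `P ∘ Π̃ = id`, the map `Dˡ(σ, γ) = P(∇(i σ, Π̃ γ))` is a
`(ρ_E ∘ i)`-connection on `D` and `Dʳ(σ, γ) = P(∇(Π̃ σ, i γ))` is a `(ρ_E ∘ Π̃)`-connection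
on `D`. -/
theorem projected_connections
    (ρE : E →ₗ[A] Derivation R A A) (nab : E → E → E)
    (hnab : IsConnection ρE nab)
    (i : D →ₗ[A] E) (Pit : D →ₗ[A] E) (P : E →ₗ[A] D)
    (hPi : ∀ d : D, P (i d) = d) (hPPit : ∀ d : D, P (Pit d) = d) :
    IsConnection (ρE ∘ₗ i) (fun σ γ => P (nab (i σ) (Pit γ))) ∧
    IsConnection (ρE ∘ₗ Pit) (fun σ γ => P (nab (Pit σ) (i γ))) := by
  obtain ⟨⟨h1, h2, h3, h4⟩, h5, h6⟩ := hnab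
  have key : ∀ (a b : D →ₗ[A] E), (∀ d : D, P (b d) = d) →
      IsConnection (ρE ∘ₗ a) (fun σ γ => P (nab (a σ) (b γ))) := by
    intro a b hb
    refine ⟨⟨?_, ?_, ?_, ?_⟩, ?_, ?_⟩
    · intro x y z; simp [h1]
    · intro r x z
      simp only [LinearMap.map_smul_of_tower, h2]
    · intro x y z; simp [h3]
    · intro r x y
      simp only [LinearMap.map_smul_of_tower, h4]
    · intro f σ γ; simp [h5]
    · intro f σ γ; simp [h6, hb]
  exact ⟨key i Pit hPPit, key Pit i hPi⟩
end
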